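/- arXiv:1405.2731 — 7 statements merged into one kernel-verified Lean document; each statement's English description precedes it below -/
import Mathlib

section
/- If p > 1 and (a_k) is a sequence of nonnegative real numbers with ∑ a_n^p < ∞, then ∑_{n=1}^∞ ((1/n) ∑_{k=1}^n a_k)^p ≤ (p/(p-1))^p ∑_{n=1}^∞ a_n^p. -/
/-!
Write `A n` for the Cesàro means, so that `a n = (n + 1) A n - n A (n - 1)`. Young's inequality
`p x y^(p-1) ≤ x^p + (p - 1) y^p` with `x = A (n - 1)`, `y = A n` bounds `(p - 1) A n ^ p` by
`p a n A n ^ (p - 1)` plus a telescoping term, whence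
`(p - 1) ∑_{n<N} A n ^ p ≤ p ∑_{n<N} a n A n ^ (p - 1)`. Hölder bounds the right-hand side by
`p ‖a‖_p ‖A‖_p ^ (p - 1)` on `range N`; cancelling `‖A‖_p ^ (p - 1)` gives the finite inequality
with constant `(p / (p - 1)) ^ p`, uniformly in `N`.
-/

open Finset

open Real in
lemma Real.mul_mul_rpow_sub_one_le {p x y : ℝ} (hp : 1 < p) (hx : 0 ≤ x) (hy : 0 ≤ y) :
    p * (x * y ^ (p - 1)) ≤ x ^ p + (p - 1) * y ^ p := by
  have hpq := HolderConjugate.conjExponent hp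
  have young := young_inequality_of_nonneg hx (rpow_nonneg hy (p - 1)) hpq
  rw [← rpow_mul hy, hpq.sub_one_mul_conj] at young
  calc p * (x * y ^ (p - 1))
      ≤ p * (x ^ p / p + y ^ p / p.conjExponent) := by gcongr
    _ = x ^ p + (p - 1) * y ^ p := by
      rw [conjExponent]; field_simp [hpq.pos.ne', hpq.sub_one_pos.ne']

lemma Real.HolderConjugate.le_rpow_mul_of_le_mul_rpow_inv {p q c S T : ℝ}
    (hpq : p.HolderConjugate q) (hc : 0 ≤ c) (hS : 0 ≤ S) (hT : 0 ≤ T)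
    (h : T ≤ c * S ^ p⁻¹ * T ^ q⁻¹) : T ≤ c ^ p * S := by
  rcases hT.eq_or_lt with rfl | hT
  · positivity
  have hsplit : T ^ p⁻¹ * T ^ q⁻¹ = T := by
    rw [← Real.rpow_add hT, hpq.inv_add_inv_eq_one, Real.rpow_one]
  have hroot : T ^ p⁻¹ ≤ c * S ^ p⁻¹ := by
    refine le_of_mul_le_mul_right ?_ (Real.rpow_pos_of_pos hT q⁻¹)
    rwa [hsplit]
  calc T = (T ^ p⁻¹) ^ p := by rw [Real.rpow_inv_rpow hT.le hpq.ne_zero]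
    _ ≤ (c * S ^ p⁻¹) ^ p := by gcongr; exact hpq.nonneg
    _ = c ^ p * S := by rw [Real.mul_rpow hc (by positivity), Real.rpow_inv_rpow hS hpq.ne_zero]

noncomputable def cesaroMean (a : ℕ → ℝ) (n : ℕ) : ℝ :=
  (∑ k ∈ range (n + 1), a k) / (n + 1)

section CesaroMean

variable {a : ℕ → ℝ}

lemma cesaroMean_nonneg (ha : ∀ n, 0 ≤ a n) (n : ℕ) : 0 ≤ cesaroMean a n :=
  div_nonneg (sum_nonneg fun k _ => ha k) n.cast_add_one_pos.le

-- At `n = 0` the truncated `0 - 1 = 0` is harmless: the mean is multiplied by `0`.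
lemma natCast_mul_cesaroMean_sub_one (a : ℕ → ℝ) (n : ℕ) :
    n * cesaroMean a (n - 1) = ∑ k ∈ range n, a k := by
  cases n with
  | zero => simp
  | succ n => simp [cesaroMean, mul_div_cancel₀, n.cast_add_one_ne_zero]

lemma apply_eq_sub_cesaroMean (a : ℕ → ℝ) (n : ℕ) :
    a n = (n + 1) * cesaroMean a n - n * cesaroMean a (n - 1) := by
  have h := natCast_mul_cesaroMean_sub_one a (n + 1)
  rw [Nat.add_sub_cancel, Nat.cast_succ] at h
  rw [h, natCast_mul_cesaroMean_sub_one, sum_range_succ_sub_sum]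

variable {p : ℝ}

lemma sub_one_mul_cesaroMean_rpow_le (hp : 1 < p) (ha : ∀ n, 0 ≤ a n) (n : ℕ) :
    (p - 1) * cesaroMean a n ^ p ≤ p * (a n * cesaroMean a n ^ (p - 1)) +
      (n * cesaroMean a (n - 1) ^ p - (n + 1) * cesaroMean a n ^ p) := by
  rw [apply_eq_sub_cesaroMean a n]
  set y := cesaroMean a n
  have hy := cesaroMean_nonneg ha n
  have young := Real.mul_mul_rpow_sub_one_le hp (cesaroMean_nonneg ha (n - 1)) hy
  have hyp : y * y ^ (p - 1) = y ^ p := by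
    rw [← Real.rpow_one_add' hy (by linarith), add_sub_cancel]
  linear_combination (n : ℝ) * young - p * (n + 1) * hyp

lemma sub_one_mul_sum_cesaroMean_rpow_le (hp : 1 < p) (ha : ∀ n, 0 ≤ a n) (N : ℕ) :
    (p - 1) * ∑ n ∈ range N, cesaroMean a n ^ p ≤
      p * ∑ n ∈ range N, a n * cesaroMean a n ^ (p - 1) := by
  let B : ℕ → ℝ := fun n => n * cesaroMean a (n - 1) ^ p
  have hB : ∀ n, B n - B (n + 1) = n * cesaroMean a (n - 1) ^ p - (n + 1) * cesaroMean a n ^ p :=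
    fun n => by simp [B]
  have hBN : 0 ≤ B N := mul_nonneg N.cast_nonneg (Real.rpow_nonneg (cesaroMean_nonneg ha _) p)
  have hsum := sum_le_sum fun n (_ : n ∈ range N) => sub_one_mul_cesaroMean_rpow_le hp ha n
  simp only [← hB] at hsum
  rw [sum_add_distrib, sum_range_sub', ← mul_sum, ← mul_sum] at hsum
  have hB0 : B 0 = 0 := by simp [B]
  linarith

theorem sum_cesaroMean_rpow_le (hp : 1 < p) (ha : ∀ n, 0 ≤ a n) (N : ℕ) :
    ∑ n ∈ range N, cesaroMean a n ^ p ≤ (p / (p - 1)) ^ p * ∑ n ∈ range N, a n ^ p := by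
  have hpq := Real.HolderConjugate.conjExponent hp
  have hA : ∀ n, 0 ≤ cesaroMean a n := cesaroMean_nonneg ha
  have holder := Real.inner_le_Lp_mul_Lq_of_nonneg (range N) hpq (fun n _ => ha n)
    (fun n _ => Real.rpow_nonneg (hA n) (p - 1))
  simp only [← Real.rpow_mul (hA _), hpq.sub_one_mul_conj, one_div] at holder
  refine hpq.le_rpow_mul_of_le_mul_rpow_inv (div_nonneg hpq.nonneg hpq.sub_one_pos.le)
    (sum_nonneg fun n _ => Real.rpow_nonneg (ha n) p)
    (sum_nonneg fun n _ => Real.rpow_nonneg (hA n) p) ?_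
  rw [mul_assoc, div_mul_eq_mul_div, le_div_iff₀ hpq.sub_one_pos, mul_comm]
  exact (sub_one_mul_sum_cesaroMean_rpow_le hp ha N).trans (by gcongr)

end CesaroMean

/-- Discrete Hardy inequality: for `p > 1` and a nonnegative sequence `a`
(indexed here from `0`, with `a n` standing for `a_{n+1}`) with `∑ aₙ^p < ∞`,
the Cesàro averages satisfy
`∑ₙ ((1/n) ∑_{k=1}^n a_k)^p ≤ (p/(p-1))^p ∑ₙ aₙ^p`. -/
theorem discrete_hardy_inequality (p : ℝ) (hp : 1 < p) (a : ℕ → ℝ)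
    (ha : ∀ n, 0 ≤ a n) (hsum : Summable fun n => a n ^ p) :
    Summable (fun n : ℕ =>
      ((∑ k ∈ Finset.range (n + 1), a k) / (n + 1 : ℝ)) ^ p) ∧
    (∑' n : ℕ, ((∑ k ∈ Finset.range (n + 1), a k) / (n + 1 : ℝ)) ^ p)
      ≤ (p / (p - 1)) ^ p * ∑' n : ℕ, a n ^ p := by
  have hA : ∀ n, 0 ≤ cesaroMean a n ^ p := fun n => Real.rpow_nonneg (cesaroMean_nonneg ha n) p
  have hbound : ∀ N, ∑ n ∈ range N, cesaroMean a n ^ p ≤ (p / (p - 1)) ^ p * ∑' n, a n ^ p :=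
    fun N => (sum_cesaroMean_rpow_le hp ha N).trans <| by
      gcongr
      exact hsum.sum_le_tsum _ fun n _ => Real.rpow_nonneg (ha n) p
  exact ⟨summable_of_sum_range_le hA hbound, Real.tsum_le_of_sum_range_le hA hbound⟩
end

section
/- If (a_n) is a nonnegative real sequence in ℓ², then the sequence of Cesàro averages ((1/n) ∑_{k=1}^n a_k)_{n≥1} is also in ℓ², and its ℓ² norm is at most 2 times the ℓ² norm of (a_n). -/
/-!
Write `Aₙ` for the mean of `a₀, …, aₙ`. Since `aₙ₊₁ = (n + 2) Aₙ₊₁ - (n + 1) Aₙ`, the inequality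
`2 x y ≤ x² + y²` gives `Aₙ₊₁² ≤ 2 Aₙ₊₁ aₙ₊₁ - (n + 2) Aₙ₊₁² + (n + 1) Aₙ²`, which telescopes to
`∑_{n < N} Aₙ² ≤ 2 ∑_{n < N} Aₙ aₙ`. By Cauchy–Schwarz the right-hand side is at most
`2 (∑_{n < N} Aₙ²)^{1/2} (∑_{n < N} aₙ²)^{1/2}`, so every partial sum of `∑ Aₙ²` is at most `4 ∑ aₙ²`.
-/

open Finset

namespace cesaroMean

variable (a : ℕ → ℝ)

theorem natCast_add_one_mul (n : ℕ) :
    ((n : ℝ) + 1) * cesaroMean a n = ∑ k ∈ range (n + 1), a k :=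
  mul_div_cancel₀ _ (Nat.cast_add_one_ne_zero n)

theorem zero_eq : cesaroMean a 0 = a 0 := by
  simp [cesaroMean]

theorem apply_succ_eq (n : ℕ) :
    a (n + 1) = ((n : ℝ) + 2) * cesaroMean a (n + 1) - ((n : ℝ) + 1) * cesaroMean a n := by
  have h := natCast_add_one_mul a (n + 1)
  rw [sum_range_succ, ← natCast_add_one_mul] at h
  push_cast at h
  linarith

theorem sq_succ_add_le (n : ℕ) :
    cesaroMean a (n + 1) ^ 2 + ((n : ℝ) + 2) * cesaroMean a (n + 1) ^ 2
      ≤ 2 * (cesaroMean a (n + 1) * a (n + 1)) + ((n : ℝ) + 1) * cesaroMean a n ^ 2 := by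
  rw [apply_succ_eq a n]
  nlinarith [mul_nonneg (n.cast_add_one_pos (α := ℝ)).le
    (sq_nonneg (cesaroMean a (n + 1) - cesaroMean a n))]

theorem sum_sq_add_le (N : ℕ) :
    ∑ n ∈ range (N + 1), cesaroMean a n ^ 2 + ((N : ℝ) + 1) * cesaroMean a N ^ 2
      ≤ 2 * ∑ n ∈ range (N + 1), cesaroMean a n * a n := by
  induction N with
  | zero =>
    simp only [zero_add, range_one, sum_singleton, Nat.cast_zero, zero_eq]
    linarith
  | succ N ih =>
    have step := sq_succ_add_le a N
    rw [sum_range_succ, sum_range_succ (fun n => cesaroMean a n * a n)]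
    push_cast
    linarith

theorem sum_sq_le_two_mul_sum_mul (N : ℕ) :
    ∑ n ∈ range N, cesaroMean a n ^ 2 ≤ 2 * ∑ n ∈ range N, cesaroMean a n * a n := by
  cases N with
  | zero => simp
  | succ N =>
    have hN := sum_sq_add_le a N
    nlinarith [mul_nonneg (N.cast_add_one_pos (α := ℝ)).le (sq_nonneg (cesaroMean a N))]

theorem sum_sq_le (N : ℕ) :
    ∑ n ∈ range N, cesaroMean a n ^ 2 ≤ 4 * ∑ n ∈ range N, a n ^ 2 := by
  set S := ∑ n ∈ range N, cesaroMean a n ^ 2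
  set T := ∑ n ∈ range N, a n ^ 2
  set P := ∑ n ∈ range N, cesaroMean a n * a n
  have hS : 0 ≤ S := sum_nonneg fun _ _ => sq_nonneg _
  have hT : 0 ≤ T := sum_nonneg fun _ _ => sq_nonneg _
  have hSP : S ≤ 2 * P := sum_sq_le_two_mul_sum_mul a N
  have cauchy_schwarz : P ^ 2 ≤ S * T := sum_mul_sq_le_sq_mul_sq _ _ _
  nlinarith

theorem summable_sq_and_tsum_sq_le (hsum : Summable fun n => a n ^ 2) :
    (Summable fun n => cesaroMean a n ^ 2) ∧
      ∑' n, cesaroMean a n ^ 2 ≤ 4 * ∑' n, a n ^ 2 := by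
  have bound (N : ℕ) : ∑ n ∈ range N, cesaroMean a n ^ 2 ≤ 4 * ∑' n, a n ^ 2 :=
    (sum_sq_le a N).trans <| mul_le_mul_of_nonneg_left
      (hsum.sum_le_tsum _ fun _ _ => sq_nonneg _) (by norm_num)
  exact ⟨summable_of_sum_range_le (fun _ => sq_nonneg _) bound,
    Real.tsum_le_of_sum_range_le (fun _ => sq_nonneg _) bound⟩

end cesaroMean

theorem hardy_p_two_general (a : ℕ → ℝ)
    (hsum : Summable fun n => a n ^ 2) :
    Summable (fun n : ℕ =>
      ((∑ k ∈ Finset.range (n + 1), a k) / (n + 1 : ℝ)) ^ 2) ∧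
    Real.sqrt (∑' n : ℕ, ((∑ k ∈ Finset.range (n + 1), a k) / (n + 1 : ℝ)) ^ 2)
      ≤ 2 * Real.sqrt (∑' n : ℕ, a n ^ 2) := by
  obtain ⟨hsummable, htsum⟩ := cesaroMean.summable_sq_and_tsum_sq_le a hsum
  refine ⟨hsummable, Real.sqrt_le_iff.mpr ⟨by positivity, ?_⟩⟩
  rw [mul_pow, Real.sq_sqrt (tsum_nonneg fun _ => sq_nonneg _)]
  exact htsum.trans_eq (by norm_num)

/-- Hardy inequality for `p = 2`: if a nonnegative sequence is in `ℓ²`, so is the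
sequence of its Cesàro averages, with `ℓ²` norm at most twice as large. -/
theorem hardy_p_two (a : ℕ → ℝ) (ha : ∀ n, 0 ≤ a n)
    (hsum : Summable fun n => a n ^ 2) :
    Summable (fun n : ℕ =>
      ((∑ k ∈ Finset.range (n + 1), a k) / (n + 1 : ℝ)) ^ 2) ∧
    Real.sqrt (∑' n : ℕ, ((∑ k ∈ Finset.range (n + 1), a k) / (n + 1 : ℝ)) ^ 2)
      ≤ 2 * Real.sqrt (∑' n : ℕ, a n ^ 2) :=
  hardy_p_two_general a hsum
end

section
/- The lower triangular infinite matrix whose n-th row has entries 1/√n in columns 1 through n and 0 elsewhere does not define a bounded operator on ℓ²; i.e., there is no constant C such that ∑_{n=1}^∞ (1/n)|∑_{j=1}^n a_j|² ≤ C ∑_{n=1}^∞ |a_n|² for all (a_n) ∈ ℓ². -/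
open Finset

/-!
The sequence `a_n = 1/n` is square summable, but its partial sums `∑_{j ≤ n} 1/j` are at
least `1`, so the image sequence has terms at least `1/√n` and its squared norm dominates the
harmonic series.
-/

section

variable {𝕜 : Type*} [RCLike 𝕜]

theorem RCLike.norm_natCast_add_one (n : ℕ) : ‖(n : 𝕜) + 1‖ = n + 1 := by
  exact_mod_cast RCLike.norm_natCast (K := 𝕜) (n + 1)

theorem summable_norm_inv_natCast_add_one_sq :
    Summable fun n : ℕ => ‖((n : 𝕜) + 1)⁻¹‖ ^ 2 := by
  simp only [norm_inv, RCLike.norm_natCast_add_one, inv_pow]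
  exact_mod_cast (summable_nat_add_iff 1).mpr (Real.summable_nat_pow_inv.mpr one_lt_two)

theorem one_le_norm_sum_range_succ_inv_natCast_add_one (n : ℕ) :
    1 ≤ ‖∑ j ∈ range (n + 1), ((j : 𝕜) + 1)⁻¹‖ := by
  have hsum : ∑ j ∈ range (n + 1), ((j : 𝕜) + 1)⁻¹ =
      ((∑ j ∈ range (n + 1), ((j : ℝ) + 1)⁻¹ : ℝ) : 𝕜) := by
    push_cast; rfl
  rw [hsum, RCLike.norm_of_nonneg (by positivity)]
  simpa using single_le_sum (f := fun j : ℕ => ((j : ℝ) + 1)⁻¹)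
    (fun _ _ => by positivity) (mem_range.mpr n.succ_pos)

end

theorem not_summable_one_div_succ_mul_sq_of_one_le_norm {E : Type*} [SeminormedAddCommGroup E]
    {s : ℕ → E} (hs : ∀ n, 1 ≤ ‖s n‖) :
    ¬ Summable fun n : ℕ => 1 / (n + 1 : ℝ) * ‖s n‖ ^ 2 := fun h =>
  Real.not_summable_one_div_natCast <| (summable_nat_add_iff 1).mp <|
    h.of_nonneg_of_le (fun _ => by positivity) fun n => by
      push_cast
      exact le_mul_of_one_le_right (by positivity) (one_le_pow₀ (hs n))

/-- The lower triangular matrix with entries `1/√n` in row `n`, columns `1..n`,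
is not bounded on `ℓ²`: there is no constant `C` such that for every `a ∈ ℓ²`
the sequence `((1/√n) ∑_{j=1}^n a_j)` is in `ℓ²` with
`∑ (1/n)|∑_{j=1}^n a_j|² ≤ C ∑ |a_n|²`. -/
theorem cesaro_sqrt_matrix_unbounded_on_l2 :
    ¬ ∃ C : ℝ, ∀ a : ℕ → ℂ, Summable (fun n => ‖a n‖ ^ 2) →
      Summable (fun n : ℕ =>
        (1 / (n + 1 : ℝ)) * ‖∑ j ∈ Finset.range (n + 1), a j‖ ^ 2) ∧
      (∑' n : ℕ, (1 / (n + 1 : ℝ)) * ‖∑ j ∈ Finset.range (n + 1), a j‖ ^ 2)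
        ≤ C * ∑' n : ℕ, ‖a n‖ ^ 2 := by
  rintro ⟨C, hC⟩
  exact not_summable_one_div_succ_mul_sq_of_one_le_norm
    one_le_norm_sum_range_succ_inv_natCast_add_one
    (hC _ summable_norm_inv_natCast_add_one_sq).1
end

section
/- For p ≥ 1, the lower triangular infinite matrix whose n-th row has entries n^{1/p − 1} in columns 1 through n does not define a bounded operator on ℓ^p; i.e., there is no constant C with ∑_{n=1}^∞ n^{1−p}|∑_{j=1}^n a_j|^p ≤ C ∑_{n=1}^∞ |a_n|^p for all (a_n) ∈ ℓ^p. -/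
/-!
Test the inequality on the indicator `a` of `{0, …, N-1}`, whose `ℓᵖ` sum is `N`. Every partial
sum of `a` of length `n + 1 ≥ N` equals `N`, so each of the `N` rows `N ≤ n < 2N` contributes at
least `(2N)^{1-p} Nᵖ = 2^{1-p} N` to the left-hand side, which is therefore at least
`2^{1-p} N²`. A constant `C` would give `2^{1-p} N ≤ C` for all `N`.
-/

open Finset

lemma sum_range_ite_lt_of_le {N m : ℕ} (h : N ≤ m) :
    ∑ j ∈ range m, (if j < N then (1 : ℂ) else 0) = N := by
  have : (range m).filter (· < N) = range N := by
    ext j; simp only [mem_filter, mem_range]; omega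
  rw [sum_boole, this, card_range]

lemma hasSum_norm_rpow_ite_lt {p : ℝ} (hp : p ≠ 0) (N : ℕ) :
    HasSum (fun n => ‖(if n < N then (1 : ℂ) else 0)‖ ^ p) N := by
  have h := hasSum_sum_of_ne_finset_zero (L := SummationFilter.unconditional ℕ)
    (f := fun n : ℕ => ‖(if n < N then (1 : ℂ) else 0)‖ ^ p) (s := range N)
    (fun n hn => by simp_all)
  rwa [sum_congr rfl fun n hn => by rw [if_pos (mem_range.mp hn), norm_one, Real.one_rpow],
    sum_const, card_range, nsmul_one] at h

lemma two_rpow_mul_le_rpow_mul_rpow {p : ℝ} (hp : 1 ≤ p) {N n : ℕ} (hN : 0 < N)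
    (hn : n + 1 ≤ 2 * N) :
    (2 : ℝ) ^ (1 - p) * N ≤ ((n + 1 : ℝ)) ^ (1 - p) * (N : ℝ) ^ p := by
  have hN' : (0 : ℝ) < N := by exact_mod_cast hN
  calc (2 : ℝ) ^ (1 - p) * N = (2 * N : ℝ) ^ (1 - p) * (N : ℝ) ^ p := by
        rw [Real.mul_rpow zero_le_two hN'.le, mul_assoc, ← Real.rpow_add hN', sub_add_cancel,
          Real.rpow_one]
    _ ≤ ((n + 1 : ℝ)) ^ (1 - p) * (N : ℝ) ^ p := by
        refine mul_le_mul_of_nonneg_right ?_ (by positivity)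
        exact Real.rpow_le_rpow_of_nonpos (by positivity) (by exact_mod_cast hn) (by linarith)

lemma two_rpow_mul_sq_le_tsum_ite_lt {p : ℝ} (hp : 1 ≤ p) {N : ℕ} (hN : 0 < N)
    (hs : Summable fun n : ℕ =>
      ((n + 1 : ℝ)) ^ (1 - p) * ‖∑ j ∈ range (n + 1), (if j < N then (1 : ℂ) else 0)‖ ^ p) :
    (2 : ℝ) ^ (1 - p) * N * N ≤
      ∑' n : ℕ, ((n + 1 : ℝ)) ^ (1 - p) *
        ‖∑ j ∈ range (n + 1), (if j < N then (1 : ℂ) else 0)‖ ^ p := by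
  calc (2 : ℝ) ^ (1 - p) * N * N = #(Ico N (2 * N)) • ((2 : ℝ) ^ (1 - p) * N) := by
        rw [Nat.card_Ico, show 2 * N - N = N by omega, nsmul_eq_mul, mul_comm]
    _ ≤ ∑ n ∈ Ico N (2 * N), ((n + 1 : ℝ)) ^ (1 - p) *
          ‖∑ j ∈ range (n + 1), (if j < N then (1 : ℂ) else 0)‖ ^ p := by
        refine card_nsmul_le_sum _ _ _ fun n hn => ?_
        rw [mem_Ico] at hn
        rw [sum_range_ite_lt_of_le (by omega), Complex.norm_natCast]
        exact two_rpow_mul_le_rpow_mul_rpow hp hN (by omega)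
    _ ≤ _ := hs.sum_le_tsum _ fun _ _ => by positivity

/-- For `p ≥ 1`, the lower triangular matrix with entries `n^{1/p - 1}` in row
`n`, columns `1..n`, is not bounded on `ℓᵖ`: there is no constant `C` with
`∑ n^{1-p} |∑_{j=1}^n a_j|ᵖ ≤ C ∑ |a_n|ᵖ` for all `a ∈ ℓᵖ`. -/
theorem cesaro_type_matrix_unbounded_on_lp (p : ℝ) (hp : 1 ≤ p) :
    ¬ ∃ C : ℝ, ∀ a : ℕ → ℂ, Summable (fun n => ‖a n‖ ^ p) →
      Summable (fun n : ℕ =>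
        ((n + 1 : ℝ)) ^ (1 - p) * ‖∑ j ∈ Finset.range (n + 1), a j‖ ^ p) ∧
      (∑' n : ℕ, ((n + 1 : ℝ)) ^ (1 - p) * ‖∑ j ∈ Finset.range (n + 1), a j‖ ^ p)
        ≤ C * ∑' n : ℕ, ‖a n‖ ^ p := by
  rintro ⟨C, hC⟩
  obtain ⟨N, hN⟩ := exists_nat_gt (max 0 (C / 2 ^ (1 - p)))
  have hN0 : (0 : ℝ) < N := (le_max_left _ _).trans_lt hN
  have hinput := hasSum_norm_rpow_ite_lt (p := p) (by linarith) N
  obtain ⟨hs, hle⟩ := hC _ hinput.summable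
  rw [hinput.tsum_eq] at hle
  have hbound : (2 : ℝ) ^ (1 - p) * N ≤ C := le_of_mul_le_mul_right
    ((two_rpow_mul_sq_le_tsum_ite_lt hp (by exact_mod_cast hN0) hs).trans hle) hN0
  have hC_lt : C < (2 : ℝ) ^ (1 - p) * N :=
    (div_lt_iff₀' (by positivity)).mp ((le_max_right _ _).trans_lt hN)
  exact hbound.not_gt hC_lt
end

section
/- Let (e_n) be an orthonormal basis of a Hilbert space H, T the right shift (T e_n = e_{n+1}), k ∈ ℕ, and φ_n = (I − T)^k e_n. Then the closed linear span of (φ_n)_{n≥1} is all of H. -/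
/-!
The adjoint of `(I - T)^k` is `(I - T*)^k`, where `T*` is the backward shift. A fixed point `y`
of `T*` has constant coordinates `⟪e_n, y⟫ = ⟪e_{n+1}, y⟫`, which are square-summable only if
they vanish; so `I - T*`, hence `(I - T*)^k`, is injective. Thus `(I - T)^k` has dense range,
and it maps the dense span of `(e_n)` onto a dense subspace, the span of `(φ_n)`.
-/

open scoped InnerProductSpace InnerProduct

section

variable {𝕜 E F : Type*} [RCLike 𝕜] [NormedAddCommGroup E] [InnerProductSpace 𝕜 E]
  [NormedAddCommGroup F] [InnerProductSpace 𝕜 F]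

theorem HilbertBasis.eq_zero_of_forall_inner_eq_zero {ι : Type*} (b : HilbertBasis ι 𝕜 E)
    {y : E} (h : ∀ i, ⟪b i, y⟫_𝕜 = 0) : y = 0 :=
  b.repr.injective <| by ext i; simp [b.repr_apply_apply, h i]

namespace ContinuousLinearMap

theorem dense_span_range_comp {ι : Type*} {A : E →L[𝕜] F} (hA : DenseRange A) {v : ι → E}
    (hv : Dense (Submodule.span 𝕜 (Set.range v) : Set E)) :
    Dense (Submodule.span 𝕜 (Set.range (A ∘ v)) : Set F) := by
  rw [Set.range_comp, ← coe_coe, Submodule.span_image]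
  exact hA.dense_image A.continuous hv

variable [CompleteSpace E] [CompleteSpace F]

theorem denseRange_of_injective_adjoint {A : E →L[𝕜] F} (h : Function.Injective (A†)) :
    DenseRange A := by
  change Dense ((LinearMap.range (A : E →ₗ[𝕜] F) : Submodule 𝕜 F) : Set F)
  rw [Submodule.dense_iff_topologicalClosure_eq_top, Submodule.topologicalClosure_eq_top_iff,
    orthogonal_range, LinearMap.ker_eq_bot]
  exact h

theorem eq_zero_of_adjoint_apply_eq_self_of_shift (b : HilbertBasis ℕ 𝕜 E) {T : E →L[𝕜] E}
    (hT : ∀ n, T (b n) = b (n + 1)) {y : E} (hy : (T†) y = y) : y = 0 := by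
  have hstep (n : ℕ) : ⟪b (n + 1), y⟫_𝕜 = ⟪b n, y⟫_𝕜 := by
    rw [← hT, ← adjoint_inner_right, hy]
  have hconst (n : ℕ) : ⟪b n, y⟫_𝕜 = ⟪b 0, y⟫_𝕜 := by
    induction n with
    | zero => rfl
    | succ n ih => rw [hstep, ih]
  have hsq : ‖⟪b 0, y⟫_𝕜‖ ^ 2 = 0 := (summable_const_iff _).mp <| by
    simpa only [hconst] using b.orthonormal.inner_products_summable y
  have h0 : ⟪b 0, y⟫_𝕜 = 0 := norm_eq_zero.mp (pow_eq_zero_iff two_ne_zero |>.mp hsq)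
  exact b.eq_zero_of_forall_inner_eq_zero fun n => (hconst n).trans h0

theorem injective_one_sub_adjoint_of_shift (b : HilbertBasis ℕ 𝕜 E) {T : E →L[𝕜] E}
    (hT : ∀ n, T (b n) = b (n + 1)) : Function.Injective (1 - T† : E →L[𝕜] E) := by
  rw [← coe_coe, ← LinearMap.ker_eq_bot, LinearMap.ker_eq_bot']
  intro y hy
  exact eq_zero_of_adjoint_apply_eq_self_of_shift b hT (sub_eq_zero.mp hy).symm

end ContinuousLinearMap

end

/-- If `T` is the right shift associated to an orthonormal basis `(e_n)` of a
Hilbert space `H` and `k ∈ ℕ`, then the family `φ_n = (I - T)^k e_n` has dense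
linear span in `H`. -/
theorem phi_family_complete
    {H : Type*} [NormedAddCommGroup H] [InnerProductSpace ℂ H] [CompleteSpace H]
    (b : HilbertBasis ℕ ℂ H) (T : H →L[ℂ] H) (hT : ∀ n : ℕ, T (b n) = b (n + 1))
    (k : ℕ) :
    Dense (Submodule.span ℂ
      (Set.range fun n : ℕ => ((1 - T : H →L[ℂ] H) ^ k) (b n)) : Set H) := by
  have hadj : ((1 - T) ^ k)† = (1 - T†) ^ k := by
    simp only [← ContinuousLinearMap.star_eq_adjoint, star_pow, star_sub, star_one]
  have hinj : Function.Injective (((1 - T) ^ k)†) := by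
    rw [hadj, ← ContinuousLinearMap.coe_coe, ContinuousLinearMap.toLinearMap_pow,
      Module.End.coe_pow]
    exact (ContinuousLinearMap.injective_one_sub_adjoint_of_shift b hT).iterate k
  exact ContinuousLinearMap.dense_span_range_comp
    (ContinuousLinearMap.denseRange_of_injective_adjoint hinj)
    (Submodule.dense_iff_topologicalClosure_eq_top.mpr b.dense_span)
end

section
/- Let (e_n) be an orthonormal basis of a Hilbert space H, T the right shift, k ∈ ℕ, φ_n = (I − T)^k e_n, and ψ_n = ∑_{j₁=1}^{n} ∑_{j₂=1}^{j₁} ⋯ ∑_{j_k=1}^{j_{k−1}} e_{j_k} (iterated partial sums of the basis). Then ⟨ψ_n, φ_m⟩ = δ_{nm} for all n, m, i.e., (ψ_n) is biorthogonal to (φ_n). -/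
open Finset

/-! Induction on `k`. Since `T e_m = e_{m+1}`, raising `k` replaces `φ_m` by `φ_m - φ_{m+1}` and
`ψ_n` by `∑_{j ≤ n} ψ_j`, so the new pairing is the telescoping sum
`∑_{j ≤ n} (δ_{jm} - δ_{j,m+1}) = δ_{nm}`. -/

def partialSums {M : Type*} [AddCommMonoid M] (f : ℕ → M) (n : ℕ) : M :=
  ∑ j ∈ range (n + 1), f j

theorem one_sub_pow_succ_apply_of_map_eq {R M : Type*} [Ring R] [TopologicalSpace M]
    [AddCommGroup M] [IsTopologicalAddGroup M] [Module R M] {T : M →L[R] M} {v : ℕ → M}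
    (hT : ∀ n, T (v n) = v (n + 1)) (k m : ℕ) :
    ((1 - T) ^ (k + 1)) (v m) = ((1 - T) ^ k) (v m) - ((1 - T) ^ k) (v (m + 1)) := by
  rw [pow_succ, mul_apply_eq_comp, sub_apply, one_apply_eq_self, hT, map_sub]

theorem inner_partialSums_sub_succ {𝕜 E : Type*} [RCLike 𝕜] [SeminormedAddCommGroup E]
    [InnerProductSpace 𝕜 E] {ψ φ : ℕ → E}
    (h : ∀ n m, inner 𝕜 (ψ n) (φ m) = if n = m then 1 else 0) (n m : ℕ) :
    inner 𝕜 (partialSums ψ n) (φ m - φ (m + 1)) = if n = m then 1 else 0 := by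
  simp only [partialSums, sum_inner, inner_sub_right, h]
  rw [sum_ite_eq', sum_ite_eq']
  simp only [mem_range]
  split_ifs <;> first | omega | simp

theorem inner_iterate_partialSums_one_sub_pow_apply {𝕜 E : Type*} [RCLike 𝕜]
    [SeminormedAddCommGroup E] [InnerProductSpace 𝕜 E] {v : ℕ → E} (hv : Orthonormal 𝕜 v)
    {T : E →L[𝕜] E} (hT : ∀ n, T (v n) = v (n + 1)) (k n m : ℕ) :
    inner 𝕜 ((partialSums^[k] v) n) (((1 - T) ^ k) (v m)) = if n = m then 1 else 0 := by
  induction k generalizing n m with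
  | zero => simpa using orthonormal_iff_ite.mp hv n m
  | succ k ih =>
    rw [Function.iterate_succ_apply', one_sub_pow_succ_apply_of_map_eq hT]
    exact inner_partialSums_sub_succ ih n m

theorem psi_biorthogonal_to_phi_general
    {H : Type*} [NormedAddCommGroup H] [InnerProductSpace ℂ H]
    (b : HilbertBasis ℕ ℂ H) (T : H →L[ℂ] H) (hT : ∀ n : ℕ, T (b n) = b (n + 1))
    (k : ℕ) :
    ∀ n m : ℕ,
      (inner ℂ
        (((fun f : ℕ → H => fun n => ∑ j ∈ Finset.range (n + 1), f j)^[k]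
            (fun j : ℕ => b j)) n)
        (((1 - T : H →L[ℂ] H) ^ k) (b m)) : ℂ)
        = if n = m then 1 else 0 :=
  inner_iterate_partialSums_one_sub_pow_apply b.orthonormal hT k

/-- The `k`-fold iterated-partial-sum family `ψ_n` is biorthogonal to the family
`φ_n = (I - T)^k e_n`, where `T` is the right shift associated to an orthonormal
basis `(e_n)` of a Hilbert space `H`: `⟪ψ_n, φ_m⟫ = δ_{nm}`. -/
theorem psi_biorthogonal_to_phi
    {H : Type*} [NormedAddCommGroup H] [InnerProductSpace ℂ H] [CompleteSpace H]
    (b : HilbertBasis ℕ ℂ H) (T : H →L[ℂ] H) (hT : ∀ n : ℕ, T (b n) = b (n + 1))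
    (k : ℕ) :
    ∀ n m : ℕ,
      (inner ℂ
        (((fun f : ℕ → H => fun n => ∑ j ∈ Finset.range (n + 1), f j)^[k]
            (fun j : ℕ => b j)) n)
        (((1 - T : H →L[ℂ] H) ^ k) (b m)) : ℂ)
        = if n = m then 1 else 0 :=
  psi_biorthogonal_to_phi_general b T hT k
end

section
/- Let (e_n) be an orthonormal basis of a Hilbert space H, and let x = ∑_{n=1}^∞ e_n/n ∈ H. Then the inner products of x with the biorthogonal vectors ψ_n = ∑_{j=1}^n e_j satisfy ⟨x, ψ_n⟩ = ∑_{j=1}^n 1/j → ∞ as n → ∞, while any Schauder basis expansion would require these coefficients to be bounded; hence the family φ_n = e_n − e_{n+1} is not a Schauder basis of H. -/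
/-!
The vectors `ψ_n = ∑_{j ≤ n} e_j` are biorthogonal to `φ_m = e_m - e_{m+1}`, so the coefficients
of any expansion `x = ∑ a_m φ_m` are forced to be `a_n = ⟪ψ_n, x⟫`. For `x = ∑ e_m / (m + 1)`
these are the harmonic sums, which are unbounded, whereas the terms `a_n φ_n` of a convergent
series tend to `0` and `‖φ_n‖ = √2`, so `a_n → 0`.
-/

open Finset Filter

section

variable {𝕜 E : Type*} [RCLike 𝕜] [NormedAddCommGroup E] [InnerProductSpace 𝕜 E]

theorem norm_sum_range_inv_add_one (n : ℕ) :
    ‖∑ j ∈ range n, ((j : 𝕜) + 1)⁻¹‖ = ∑ j ∈ range n, ((j : ℝ) + 1)⁻¹ := by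
  have h : ∑ j ∈ range n, ((j : 𝕜) + 1)⁻¹ = ((∑ j ∈ range n, ((j : ℝ) + 1)⁻¹ : ℝ) : 𝕜) := by
    push_cast
    rfl
  rw [h, RCLike.norm_ofReal, abs_of_nonneg (by positivity)]

theorem tendsto_norm_sum_range_inv_add_one_atTop :
    Tendsto (fun n => ‖∑ j ∈ range n, ((j : 𝕜) + 1)⁻¹‖) atTop atTop := by
  simpa only [norm_sum_range_inv_add_one, one_div] using
    Real.tendsto_sum_range_one_div_nat_succ_atTop

namespace Orthonormal

section

variable {ι : Type*} {v : ι → E}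

theorem summable_smul_iff [CompleteSpace E] (hv : Orthonormal 𝕜 v) {c : ι → 𝕜} :
    Summable (fun i => c i • v i) ↔ Summable (fun i => ‖c i‖ ^ 2) :=
  hv.orthogonalFamily.summable_iff_norm_sq_summable c

theorem inner_tsum_smul (hv : Orthonormal 𝕜 v) {c : ι → 𝕜}
    (hc : Summable (fun i => c i • v i)) (j : ι) :
    inner 𝕜 (v j) (∑' i, c i • v i) = c j := by
  classical
  rw [← innerSL_apply_apply, (innerSL 𝕜 (v j)).map_tsum hc]
  simp [orthonormal_iff_ite.mp hv]

end

variable {v : ℕ → E}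

theorem summable_inv_add_one_smul [CompleteSpace E] (hv : Orthonormal 𝕜 v) :
    Summable (fun m : ℕ => ((m : 𝕜) + 1)⁻¹ • v m) := by
  rw [hv.summable_smul_iff]
  have h := (summable_nat_add_iff 1).mpr (Real.summable_one_div_nat_pow.mpr one_lt_two)
  refine h.congr fun m => ?_
  rw [norm_inv, ← Nat.cast_add_one, RCLike.norm_natCast, inv_pow, one_div]

theorem inner_sum_range_sub_succ (hv : Orthonormal 𝕜 v) (n m : ℕ) :
    inner 𝕜 (∑ j ∈ range (n + 1), v j) (v m - v (m + 1)) = if m = n then 1 else 0 := by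
  classical
  have h : ∀ k, inner 𝕜 (∑ j ∈ range (n + 1), v j) (v k) = if k < n + 1 then 1 else 0 := by
    simp [sum_inner, orthonormal_iff_ite.mp hv]
  rw [inner_sub_right, h, h]
  split_ifs <;> first | omega | simp

theorem inner_sum_range_eq_of_hasSum (hv : Orthonormal 𝕜 v) {a : ℕ → 𝕜} {x : E}
    (hx : HasSum (fun m => a m • (v m - v (m + 1))) x) (n : ℕ) :
    inner 𝕜 (∑ j ∈ range (n + 1), v j) x = a n := by
  have h := hx.mapL (innerSL 𝕜 (∑ j ∈ range (n + 1), v j))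
  simp only [innerSL_apply_apply, inner_smul_right, hv.inner_sum_range_sub_succ, mul_ite,
    mul_one, mul_zero] at h
  simpa using h.unique (hasSum_single n fun m hm => if_neg hm)

theorem one_le_norm_sub_succ (hv : Orthonormal 𝕜 v) (m : ℕ) : 1 ≤ ‖v m - v (m + 1)‖ := by
  have h : ‖v m - v (m + 1)‖ ^ 2 = 2 := by
    rw [@norm_sub_sq 𝕜, hv.1, hv.1, hv.2 (by omega : m ≠ m + 1)]
    norm_num
  nlinarith [norm_nonneg (v m - v (m + 1))]

theorem not_hasSum_smul_sub_succ (hv : Orthonormal 𝕜 v) {x : E}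
    (hx : Tendsto (fun n => ‖inner 𝕜 x (∑ j ∈ range (n + 1), v j)‖) atTop atTop)
    (a : ℕ → 𝕜) : ¬ HasSum (fun m => a m • (v m - v (m + 1))) x := by
  intro h
  refine not_tendsto_atTop_of_tendsto_nhds (a := 0) ?_ hx
  refine squeeze_zero_norm (fun n => ?_)
    (tendsto_zero_iff_norm_tendsto_zero.mp h.summable.tendsto_atTop_zero)
  rw [norm_norm, norm_inner_symm, hv.inner_sum_range_eq_of_hasSum h, norm_smul]
  exact le_mul_of_one_le_right (norm_nonneg _) (hv.one_le_norm_sub_succ n)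

end Orthonormal

end

/-- Let `x = ∑ e_n / n` (with `(e_n)` an orthonormal basis of `H`). The inner
products with the biorthogonal vectors `ψ_n = ∑_{j=1}^n e_j` are the harmonic
sums `∑_{j=1}^n 1/j`, which tend to `∞`; consequently `φ_n = e_n - e_{n+1}`
is not a Schauder basis of `H`. -/
theorem harmonic_coefficients_unbounded_and_phi_not_basis
    {H : Type*} [NormedAddCommGroup H] [InnerProductSpace ℂ H] [CompleteSpace H]
    (b : HilbertBasis ℕ ℂ H) :
    (∀ n : ℕ,
      (inner ℂ (∑' m : ℕ, ((m : ℂ) + 1)⁻¹ • b m)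
        (∑ j ∈ Finset.range (n + 1), b j) : ℂ)
        = ∑ j ∈ Finset.range (n + 1), ((j : ℂ) + 1)⁻¹) ∧
    Filter.Tendsto (fun n : ℕ =>
        ‖(inner ℂ (∑' m : ℕ, ((m : ℂ) + 1)⁻¹ • b m)
            (∑ j ∈ Finset.range (n + 1), b j) : ℂ)‖)
      Filter.atTop Filter.atTop ∧
    ¬ ∃ f : ℕ → (H →L[ℂ] ℂ), ∀ x : H,
        HasSum (fun n : ℕ => f n x • (b n - b (n + 1))) x := by
  have hv := b.orthonormal
  have hcoeff : ∀ n : ℕ, inner ℂ (∑' m : ℕ, ((m : ℂ) + 1)⁻¹ • b m) (∑ j ∈ range (n + 1), b j)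
      = ∑ j ∈ range (n + 1), ((j : ℂ) + 1)⁻¹ := fun n => by
    rw [inner_sum]
    refine sum_congr rfl fun j _ => ?_
    rw [← inner_conj_symm, hv.inner_tsum_smul hv.summable_inv_add_one_smul]
    simp
  have hunbounded :=
    (tendsto_norm_sum_range_inv_add_one_atTop (𝕜 := ℂ)).comp (tendsto_add_atTop_nat 1)
  simp only [Function.comp_def, ← hcoeff] at hunbounded
  exact ⟨hcoeff, hunbounded, fun ⟨f, hf⟩ => hv.not_hasSum_smul_sub_succ hunbounded _ (hf _)⟩
end
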